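/- arXiv:2503.23343 — 10 statements merged into one kernel-verified Lean document; each statement's English description precedes it below -/
import Mathlib

section
/- A relation R ⊆ X × Y between sets X and Y can be written as the composition R = R^b ∘ R_a for some set Z and maps a : X → Z, b : Y → Z (where R_a = {(x, a(x)) : x ∈ X} and R^b = {(b(y), y) : y ∈ Y}) if and only if R is transitively closed, i.e., whenever (x,y), (x,y'), (x',y') ∈ R we also have (x',y) ∈ R. -/
/-! Basic theory of directed graphs, finite paths, and relation morphisms
(following "Relation morphisms of directed graphs"). -/

structure DGraph where
  V : Type
  E : Type
  s : E → V
  t : E → V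

namespace DGraph

/-- `G.chain u l w` : the list of edges `l` forms a path from `u` to `w`. -/
def chain (G : DGraph) : G.V → List G.E → G.V → Prop
  | v, [], w => v = w
  | v, e :: es, w => G.s e = v ∧ G.chain (G.t e) es w

theorem chain_append {G : DGraph} :
    ∀ {l1 : List G.E} {u v w : G.V} {l2 : List G.E},
      G.chain u l1 v → G.chain v l2 w → G.chain u (l1 ++ l2) w
  | [], _, _, _, _, h1, h2 => by cases h1; exact h2
  | e :: es, _, _, _, _, h1, h2 => ⟨h1.1, chain_append h1.2 h2⟩

/-- A vertex is regular if it emits at least one and only finitely many edges. -/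
def IsRegularV (G : DGraph) (v : G.V) : Prop :=
  (∃ e, G.s e = v) ∧ {e | G.s e = v}.Finite

end DGraph

/-- A finite path in a directed graph (a vertex when `edges = []`). -/
structure FPath (G : DGraph) where
  src : G.V
  tgt : G.V
  edges : List G.E
  chain : G.chain src edges tgt

namespace FPath

variable {G : DGraph}

/-- A vertex viewed as a length-zero path. -/
def ofVertex (v : G.V) : FPath G := ⟨v, v, [], rfl⟩

/-- An edge viewed as a length-one path. -/
def ofEdge (e : G.E) : FPath G := ⟨G.s e, G.t e, [e], ⟨rfl, rfl⟩⟩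

/-- Concatenation of composable paths. -/
def comp (x y : FPath G) (h : x.tgt = y.src) : FPath G where
  src := x.src
  tgt := y.tgt
  edges := x.edges ++ y.edges
  chain := DGraph.chain_append x.chain (by rw [h]; exact y.chain)

/-- `x.le y` : `x` is an initial subpath of `y`. -/
def le (x y : FPath G) : Prop := x.src = y.src ∧ x.edges <+: y.edges

/-- Two paths are comparable if one is an initial subpath of the other. -/
def comparable (x y : FPath G) : Prop := x.le y ∨ y.le x

/-- A path of length zero. -/
def IsVertex (x : FPath G) : Prop := x.edges = []

end FPath

/-- `IsConcat xs x` : the (nonempty) list of paths `xs` concatenates to `x`. -/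
inductive IsConcat {G : DGraph} : List (FPath G) → FPath G → Prop
  | single (x : FPath G) : IsConcat [x] x
  | cons (x : FPath G) {xs : List (FPath G)} {y : FPath G} (h : x.tgt = y.src) :
      IsConcat xs y → IsConcat (x :: xs) (x.comp y h)

/-- A relation between the finite paths of two graphs. -/
abbrev GraphRel (E F : DGraph) := Set (FPath E × FPath F)

/-- Composition of relations (`RelComp R S` is `S ∘ R` in the usual notation). -/
def RelComp {A B C : Type*} (R : Set (A × B)) (S : Set (B × C)) : Set (A × C) :=
  {p | ∃ b, (p.1, b) ∈ R ∧ (b, p.2) ∈ S}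

/-- The relation `R_f = {(x, f x)}` associated to a map. -/
def relOfFun {A B : Type*} (f : A → B) : Set (A × B) := {p | p.2 = f p.1}

/-- The relation `R^g = {(g y, y)}` associated to a map in the opposite direction. -/
def relOfCofun {A B : Type*} (g : B → A) : Set (A × B) := {p | p.1 = g p.2}

/-- A relation is transitively closed if `(x,y), (x,y'), (x',y') ∈ R` implies `(x',y) ∈ R`. -/
def TransClosed {X Y : Type*} (R : Set (X × Y)) : Prop :=
  ∀ x x' y y', (x, y) ∈ R → (x, y') ∈ R → (x', y') ∈ R → (x', y) ∈ R

/-- A relation morphism of graphs: preimages of vertices are vertices, and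
sources and targets are preserved. -/
structure IsRelMorphism (E F : DGraph) (R : GraphRel E F) : Prop where
  vertex : ∀ x y, (x, y) ∈ R → y.IsVertex → x.IsVertex
  src : ∀ x y, (x, y) ∈ R → (FPath.ofVertex x.src, FPath.ofVertex y.src) ∈ R
  tgt : ∀ x y, (x, y) ∈ R → (FPath.ofVertex x.tgt, FPath.ofVertex y.tgt) ∈ R

/-- Multiplicativity of a relation morphism. -/
def RelMult {E F : DGraph} (R : GraphRel E F) : Prop :=
  ∀ (x x' : FPath E) (y y' : FPath F) (hx : x.tgt = x'.src) (hy : y.tgt = y'.src),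
    (x, y) ∈ R → (x', y') ∈ R → (x.comp x' hx, y.comp y' hy) ∈ R

/-- Decomposability of a relation morphism. -/
def RelDecomp {E F : DGraph} (R : GraphRel E F) : Prop :=
  ∀ (y y' : FPath F) (h : y.tgt = y'.src) (xb : FPath E),
    (xb, y.comp y' h) ∈ R →
    ∃ (x x' : FPath E) (hx : x.tgt = x'.src),
      (x, y) ∈ R ∧ (x', y') ∈ R ∧ x.comp x' hx = xb

/-- Properness: all relation preimages are finite. -/
def RelProper {E F : DGraph} (R : GraphRel E F) : Prop :=
  ∀ y : FPath F, {x | (x, y) ∈ R}.Finite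

/-- Vertex disjointness: distinct vertices have disjoint relation preimages. -/
def RelVertexDisjoint {E F : DGraph} (R : GraphRel E F) : Prop :=
  ∀ v v' : F.V, v ≠ v' → ∀ u : FPath E,
    (u, FPath.ofVertex v) ∈ R → (u, FPath.ofVertex v') ∈ R → False

/-- Target injectivity: the target map restricted to the preimage of each edge is injective. -/
def RelTargetInj {E F : DGraph} (R : GraphRel E F) : Prop :=
  ∀ (f : F.E) (x x' : FPath E), (x, FPath.ofEdge f) ∈ R → (x', FPath.ofEdge f) ∈ R →
    x.tgt = x'.tgt → x = x'

/-- Target surjectivity: the target map `R⁻¹(f) → R⁻¹(t f)` is surjective for each edge. -/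
def RelTargetSurj {E F : DGraph} (R : GraphRel E F) : Prop :=
  ∀ (f : F.E) (u : E.V), (FPath.ofVertex u, FPath.ofVertex (F.t f)) ∈ R →
    ∃ x : FPath E, (x, FPath.ofEdge f) ∈ R ∧ x.tgt = u

/-- Monotonicity of a relation morphism. -/
def RelMonotone {E F : DGraph} (R : GraphRel E F) : Prop :=
  ∀ (x x' : FPath E) (f f' : F.E), (x, FPath.ofEdge f) ∈ R → (x', FPath.ofEdge f') ∈ R →
    x.le x' → x = x' ∧ f = f'

/-- Regularity of a relation morphism. -/
def RelRegular {E F : DGraph} (R : GraphRel E F) : Prop :=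
  ∀ v : F.V, F.IsRegularV v → ∀ u : E.V, (FPath.ofVertex u, FPath.ofVertex v) ∈ R →
    ∀ x : FPath E, x.src = u →
      ∃ (x' : FPath E) (f : F.E), (x', FPath.ofEdge f) ∈ R ∧ F.s f = v ∧ x.comparable x'

/-- A path homomorphism: maps vertices to vertices, commutes with sources and
targets, and is multiplicative with respect to concatenation. -/
def IsPathHom {F E : DGraph} (θ : FPath F → FPath E) : Prop :=
  (∀ x : FPath F, x.IsVertex → (θ x).IsVertex) ∧
  (∀ x : FPath F, θ (FPath.ofVertex x.src) = FPath.ofVertex (θ x).src) ∧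
  (∀ x : FPath F, θ (FPath.ofVertex x.tgt) = FPath.ofVertex (θ x).tgt) ∧
  (∀ (x x' : FPath F) (h : x.tgt = x'.src) (h' : (θ x).tgt = (θ x').src),
    θ (x.comp x' h) = (θ x).comp (θ x') h')

/-- A graph homomorphism is a length-preserving path homomorphism. -/
def IsGraphHom {E F : DGraph} (φ : FPath E → FPath F) : Prop :=
  IsPathHom φ ∧ ∀ x : FPath E, (φ x).edges.length = x.edges.length

/-- Properness of a graph homomorphism: finite fibers over vertices and edges. -/
def GHProper {E F : DGraph} (φ : FPath E → FPath F) : Prop :=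
  ∀ y : FPath F, y.edges.length ≤ 1 → {x | φ x = y}.Finite

/-- Target injectivity of a graph homomorphism. -/
def GHTargetInj {E F : DGraph} (φ : FPath E → FPath F) : Prop :=
  ∀ (f : F.E) (x x' : FPath E), φ x = FPath.ofEdge f → φ x' = FPath.ofEdge f →
    x.tgt = x'.tgt → x = x'

/-- Target surjectivity of a graph homomorphism. -/
def GHTargetSurj {E F : DGraph} (φ : FPath E → FPath F) : Prop :=
  ∀ (f : F.E) (u : E.V), φ (FPath.ofVertex u) = FPath.ofVertex (F.t f) →
    ∃ x : FPath E, φ x = FPath.ofEdge f ∧ x.tgt = u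

/-- The relation graph `G_R` of a relation morphism `R : E → F`. -/
def relGraph {E F : DGraph} (R : GraphRel E F) (hR : IsRelMorphism E F R) : DGraph where
  V := {p : E.V × F.V // (FPath.ofVertex p.1, FPath.ofVertex p.2) ∈ R}
  E := {p : FPath E × F.E // (p.1, FPath.ofEdge p.2) ∈ R}
  s := fun e => ⟨(e.1.1.src, F.s e.1.2), hR.src _ _ e.2⟩
  t := fun e => ⟨(e.1.1.tgt, F.t e.1.2), hR.tgt _ _ e.2⟩

universe u v

/-- a relation `R ⊆ X × Y` factors as `R = R^b ∘ R_a` for some set `Z`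
and maps `a : X → Z`, `b : Y → Z` iff `R` is transitively closed. -/
theorem statement0 {X : Type u} {Y : Type v} (R : Set (X × Y)) :
    (∃ (Z : Type (max u v)) (a : X → Z) (b : Y → Z),
      R = RelComp (relOfFun a) (relOfCofun b)) ↔ TransClosed R := by
  classical
  have hmem : ∀ {Z : Type (max u v)} (a : X → Z) (b : Y → Z) (x : X) (y : Y),
      (x, y) ∈ RelComp (relOfFun a) (relOfCofun b) ↔ a x = b y := by
    intro Z a b x y
    constructor
    · rintro ⟨z, hz1, hz2⟩
      simp only [relOfFun, relOfCofun, Set.mem_setOf_eq] at hz1 hz2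
      rw [← hz1, ← hz2]
    · intro h
      refine ⟨a x, rfl, ?_⟩; simp only [relOfCofun, Set.mem_setOf_eq]; exact h
  constructor
  · rintro ⟨Z, a, b, rfl⟩ x x' y y' h1 h2 h3
    rw [hmem] at h1 h2 h3 ⊢
    rw [h3, ← h2, h1]
  · intro hT
    refine ⟨Set Y ⊕ X ⊕ Y, ?_, ?_, ?_⟩
    · exact fun x => if h : ∃ y, (x, y) ∈ R then Sum.inl {y | (x, y) ∈ R}
        else Sum.inr (Sum.inl x)
    · exact fun y => if h : ∃ x, (x, y) ∈ R then
        Sum.inl {y' | ∃ x, (x, y) ∈ R ∧ (x, y') ∈ R} else Sum.inr (Sum.inr y)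
    · ext ⟨x, y⟩
      rw [hmem]
      constructor
      · intro hxy
        rw [dif_pos ⟨y, hxy⟩, dif_pos ⟨x, hxy⟩]
        congr 1
        ext y'
        simp only [Set.mem_setOf_eq]
        constructor
        · intro h; exact ⟨x, hxy, h⟩
        · rintro ⟨x'', h1, h2⟩
          exact hT x'' x y' y h2 h1 hxy
      · intro heq
        by_cases h1 : ∃ y0, (x, y0) ∈ R
        · by_cases h2 : ∃ x0, (x0, y) ∈ R
          · rw [dif_pos h1, dif_pos h2] at heq
            obtain ⟨y0, hy0⟩ := h1
            have : y0 ∈ {y' | ∃ x0, (x0, y) ∈ R ∧ (x0, y') ∈ R} := by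
              rw [← Sum.inl.inj heq]; exact hy0
            obtain ⟨x'', hx1, hx2⟩ := this
            exact hT x'' x y y0 hx1 hx2 hy0
          · rw [dif_pos h1, dif_neg h2] at heq; exact absurd heq (by simp)
        · rw [dif_neg h1] at heq
          by_cases h2 : ∃ x0, (x0, y) ∈ R
          · rw [dif_pos h2] at heq; exact absurd heq (by simp)
          · rw [dif_neg h2] at heq; simp at heq
end

section
/- If R : E → F and S : F → G are decomposable relation morphisms of directed graphs, then the composite S ∘ R is decomposable. -/
/-- the composite of decomposable relation morphisms is decomposable. -/
theorem statement4 {E F G : DGraph} {R : GraphRel E F} {S : GraphRel F G}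
    (hR : IsRelMorphism E F R) (hS : IsRelMorphism F G S)
    (hRd : RelDecomp R) (hSd : RelDecomp S) :
    RelDecomp (RelComp R S) := by
  intro z z' hz xb hxb
  obtain ⟨y, hxy, hyz⟩ := hxb
  obtain ⟨y1, y2, hy, hy1, hy2, hyy⟩ := hSd z z' hz y hyz
  subst hyy
  obtain ⟨x1, x2, hx, hx1, hx2, hxx⟩ := hRd y1 y2 hy xb hxy
  exact ⟨x1, x2, hx, ⟨y1, hx1, hy1⟩, ⟨y2, hx2, hy2⟩, hxx⟩
end

section
/- If R : E → F and S : F → G are multiplicative relation morphisms of directed graphs and R is vertex disjoint, then S ∘ R is multiplicative. -/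
/-- if `R`, `S` are multiplicative relation morphisms and `R` is
vertex disjoint, then `S ∘ R` is multiplicative. -/
theorem statement5 {E F G : DGraph} {R : GraphRel E F} {S : GraphRel F G}
    (hR : IsRelMorphism E F R) (hS : IsRelMorphism F G S)
    (hRm : RelMult R) (hSm : RelMult S) (hRv : RelVertexDisjoint R) :
    RelMult (RelComp R S) := by
  rintro x x' z z' hx hz ⟨y, hxy, hyz⟩ ⟨y', hxy', hyz'⟩
  have hy : y.tgt = y'.src := by
    by_contra hne
    exact hRv _ _ hne (FPath.ofVertex x.tgt) (hR.tgt _ _ hxy)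
      (hx ▸ hR.src _ _ hxy')
  exact ⟨y.comp y' hy, hRm _ _ _ _ hx hy hxy hxy', hSm _ _ _ _ hy hz hyz hyz'⟩
end

section
/- Let R : E → F and S : F → G be vertex-disjoint and target-injective relation morphisms of directed graphs, with R also decomposable. Then S ∘ R is target injective. -/
theorem FPath.ext' {G : DGraph} {x y : FPath G} (h1 : x.src = y.src)
    (h2 : x.tgt = y.tgt) (h3 : x.edges = y.edges) : x = y := by
  cases x; cases y; simp_all

theorem DGraph.chain_concat {G : DGraph} :
    ∀ {l : List G.E} {u w : G.V} {f : G.E},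
      G.chain u (l ++ [f]) w → G.chain u l (G.s f) ∧ G.t f = w
  | [], _, _, _, h => ⟨h.1.symm, h.2⟩
  | e :: es, _, _, _, h => by
      obtain ⟨h1, h2⟩ := DGraph.chain_concat h.2
      exact ⟨⟨h.1, h1⟩, h2⟩

/-- Target injectivity on edges extends to all paths for decomposable morphisms. -/
theorem pathTargetInj {E F : DGraph} {R : GraphRel E F} (hR : IsRelMorphism E F R)
    (hRt : RelTargetInj R) (hRd : RelDecomp R) :
    ∀ (n : ℕ) (y : FPath F), y.edges.length ≤ n → ∀ x x' : FPath E,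
      (x, y) ∈ R → (x', y) ∈ R → x.tgt = x'.tgt → x = x' := by
  intro n
  induction n with
  | zero =>
      intro y hy x x' hx hx' ht
      have hyv : y.IsVertex := List.length_eq_zero_iff.mp (Nat.le_zero.mp hy)
      have h1 : x.edges = [] := hR.vertex _ _ hx hyv
      have h2 : x'.edges = [] := hR.vertex _ _ hx' hyv
      have e1 : x.src = x.tgt := by have := x.chain; rw [h1] at this; exact this
      have e2 : x'.src = x'.tgt := by have := x'.chain; rw [h2] at this; exact this
      exact FPath.ext' (by rw [e1, e2, ht]) ht (by rw [h1, h2])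
  | succ n ih =>
      intro y hy x x' hx hx' ht
      rcases List.eq_nil_or_concat y.edges with he | ⟨l, f, he'⟩
      · exact ih y (by simp [he]) x x' hx hx' ht
      · have he : y.edges = l ++ [f] := by simpa using he'
        have hc := DGraph.chain_concat (he ▸ y.chain)
        set y₁ : FPath F := ⟨y.src, F.s f, l, hc.1⟩ with hy₁
        have hcomp : y = y₁.comp (FPath.ofEdge f) rfl :=
          FPath.ext' rfl hc.2.symm (by simpa [FPath.comp, FPath.ofEdge, he, hy₁])
        rw [hcomp] at hx hx'
        obtain ⟨a, b, hab, ha, hb, hx_eq⟩ := hRd _ _ rfl _ hx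
        obtain ⟨a', b', hab', ha', hb', hx'_eq⟩ := hRd _ _ rfl _ hx'
        have htb : b.tgt = b'.tgt := by
          rw [← hx_eq, ← hx'_eq] at ht; exact ht
        have hbb : b = b' := hRt f b b' hb hb' htb
        have hta : a.tgt = a'.tgt := by rw [hab, hab', hbb]
        have hlen : y₁.edges.length ≤ n := by
          have : y.edges.length ≤ n + 1 := hy
          rw [he] at this; simpa using this
        have haa : a = a' := ih y₁ hlen a a' ha ha' hta
        rw [← hx_eq, ← hx'_eq]
        exact FPath.ext' (by simp [FPath.comp, haa]) (by simp [FPath.comp, hbb])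
          (by simp [FPath.comp, haa, hbb])

/-- if `R`, `S` are vertex-disjoint target-injective relation
morphisms and `R` is decomposable, then `S ∘ R` is target injective. -/
theorem statement7 {E F G : DGraph} {R : GraphRel E F} {S : GraphRel F G}
    (hR : IsRelMorphism E F R) (hS : IsRelMorphism F G S)
    (hRv : RelVertexDisjoint R) (hSv : RelVertexDisjoint S)
    (hRt : RelTargetInj R) (hSt : RelTargetInj S)
    (hRd : RelDecomp R) :
    RelTargetInj (RelComp R S) := by
  rintro g x x' ⟨y, hxy, hyg⟩ ⟨y', hxy', hy'g⟩ ht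
  have hty : y.tgt = y'.tgt := by
    by_contra hne
    have h1 : (FPath.ofVertex x.tgt, FPath.ofVertex y.tgt) ∈ R := hR.tgt _ _ hxy
    have h2 : (FPath.ofVertex x.tgt, FPath.ofVertex y'.tgt) ∈ R := by
      rw [ht]; exact hR.tgt _ _ hxy'
    exact hRv y.tgt y'.tgt hne _ h1 h2
  have hyy : y = y' := hSt g y y' hyg hy'g hty
  rw [← hyy] at hxy'
  exact pathTargetInj hR hRt hRd y.edges.length y le_rfl x x' hxy hxy' ht
end

section
/- Let R : E → F and S : F → G be relation morphisms, both vertex disjoint and target injective, with R decomposable. If (x, g) ∈ S ∘ R with g an edge of G, then there is a unique y ∈ S⁻¹(g) with (t_PE(x), t_PF(y)) ∈ R; moreover, if y = f₁⋯f_n with n ≥ 1 edges, then there exist unique x₁,…,x_n ∈ FP(E) with x = x₁⋯x_n and (x_i, f_i) ∈ R for all i. -/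
section Aux

theorem DGraph.chain_tgt_unique {G : DGraph} : ∀ {l : List G.E} {u v w : G.V},
    G.chain u l v → G.chain u l w → v = w
  | [], _, _, _, h1, h2 => h1.symm.trans h2
  | _ :: _, _, _, _, h1, h2 => DGraph.chain_tgt_unique h1.2 h2.2

theorem FPath.ext'_s8 {G : DGraph} {a b : FPath G} (hs : a.src = b.src)
    (he : a.edges = b.edges) : a = b := by
  obtain ⟨as, at_, ae, ac⟩ := a
  obtain ⟨bs, bt, be, bc⟩ := b
  dsimp at hs he
  cases hs; cases he
  cases DGraph.chain_tgt_unique ac bc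
  rfl

@[simp] theorem FPath.comp_src {G : DGraph} (a b : FPath G) (h : a.tgt = b.src) :
    (a.comp b h).src = a.src := rfl

@[simp] theorem FPath.comp_tgt {G : DGraph} (a b : FPath G) (h : a.tgt = b.src) :
    (a.comp b h).tgt = b.tgt := rfl

@[simp] theorem FPath.comp_edges {G : DGraph} (a b : FPath G) (h : a.tgt = b.src) :
    (a.comp b h).edges = a.edges ++ b.edges := rfl

theorem IsConcat.ne_nil {G : DGraph} {xs : List (FPath G)} {x : FPath G}
    (h : IsConcat xs x) : xs ≠ [] := by cases h <;> simp

theorem IsConcat.inv {G : DGraph} {a : FPath G} {rest : List (FPath G)} {x : FPath G}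
    (h : IsConcat (a :: rest) x) :
    (rest = [] ∧ x = a) ∨ ∃ (w : FPath G) (hw : a.tgt = w.src),
      IsConcat rest w ∧ x = a.comp w hw := by
  cases h with
  | single => exact Or.inl ⟨rfl, rfl⟩
  | cons _ hw hc => exact Or.inr ⟨_, hw, hc, rfl⟩

theorem comp_assoc' {G : DGraph} {a b c : FPath G} (h1 : a.tgt = b.src)
    (h2 : b.tgt = c.src) (h2' : (a.comp b h1).tgt = c.src) (h1' : a.tgt = (b.comp c h2).src) :
    (a.comp b h1).comp c h2' = a.comp (b.comp c h2) h1' :=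
  FPath.ext'_s8 rfl (List.append_assoc _ _ _)

theorem isConcat_snoc {G : DGraph} : ∀ {xs : List (FPath G)} {z x : FPath G},
    IsConcat (xs ++ [z]) x → xs ≠ [] →
    ∃ (w : FPath G) (h : w.tgt = z.src), IsConcat xs w ∧ x = w.comp z h := by
  intro xs
  induction xs with
  | nil => intro z x _ hne; exact absurd rfl hne
  | cons a rest ih =>
    intro z x h _
    rcases h.inv with ⟨hnil, _⟩ | ⟨w, hw, hc, hx⟩
    · exact absurd hnil (by simp)
    · cases rest with
      | nil =>
        rcases hc.inv with ⟨_, rfl⟩ | ⟨w', _, hc', _⟩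
        · exact ⟨a, hw, IsConcat.single a, hx⟩
        · exact absurd hc'.ne_nil (by simp)
      | cons b rest' =>
        obtain ⟨w0, h0, hc0, rfl⟩ := ih hc (by simp)
        have h1 : a.tgt = w0.src := hw
        refine ⟨a.comp w0 h1, h0, IsConcat.cons a h1 hc0, ?_⟩
        rw [hx]
        exact (comp_assoc' h1 h0 h0 h1).symm

end Aux


theorem exists_decomp {E F : DGraph} {R : GraphRel E F} (hRd : RelDecomp R) :
    ∀ (es : List F.E), ∀ (y : FPath F), y.edges = es → ∀ (x : FPath E), (x, y) ∈ R →
      es ≠ [] →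
      ∃ xs : List (FPath E), IsConcat xs x ∧ ∃ hlen : xs.length = es.length,
        ∀ i : Fin xs.length, (xs.get i, FPath.ofEdge (es.get (Fin.cast hlen i))) ∈ R := by
  intro es
  induction es with
  | nil => intro _ _ _ _ h; exact absurd rfl h
  | cons f es' ih =>
    intro y hye x hxy _
    have hsrc : F.s f = y.src := by
      have := y.chain; rw [hye] at this; exact this.1
    cases es' with
    | nil =>
      have hy : y = FPath.ofEdge f := by
        refine FPath.ext'_s8 hsrc.symm ?_
        simpa [FPath.ofEdge] using hye
      refine ⟨[x], IsConcat.single x, by simp, ?_⟩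
      intro i
      have h0 : (([x] : List (FPath E)).get i) = x := by simp
      have h1 : (([f] : List F.E).get (Fin.cast (by simp) i)) = f := by simp
      rw [h0, h1, ← hy]
      exact hxy
    | cons f2 es2 =>
      have hch : F.chain (F.t f) (f2 :: es2) y.tgt := by
        have := y.chain; rw [hye] at this; exact this.2
      set y2 : FPath F := ⟨F.t f, y.tgt, f2 :: es2, hch⟩ with hy2
      have hy : y = (FPath.ofEdge f).comp y2 rfl := by
        refine FPath.ext'_s8 hsrc.symm ?_
        simp [FPath.ofEdge, hye, hy2]
      rw [hy] at hxy
      obtain ⟨x1, x2, hx12, hx1, hx2, hcomp⟩ := hRd (FPath.ofEdge f) y2 rfl x hxy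
      obtain ⟨xs2, hc2, hlen2, hget2⟩ := ih y2 rfl x2 hx2 (by simp)
      refine ⟨x1 :: xs2, ?_, by simp [hlen2], ?_⟩
      · rw [← hcomp]; exact IsConcat.cons x1 hx12 hc2
      · intro i
        cases i using Fin.cases with
        | zero => simpa using hx1
        | succ j => simpa using hget2 j


theorem uniq_decomp {E F : DGraph} {R : GraphRel E F} (hRt : RelTargetInj R) :
    ∀ (es : List F.E) (x : FPath E) (xs xs' : List (FPath E))
      (_ : IsConcat xs x) (_ : IsConcat xs' x)
      (h1 : xs.length = es.length) (h2 : xs'.length = es.length),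
      (∀ i : Fin xs.length, (xs.get i, FPath.ofEdge (es.get (Fin.cast h1 i))) ∈ R) →
      (∀ i : Fin xs'.length, (xs'.get i, FPath.ofEdge (es.get (Fin.cast h2 i))) ∈ R) →
      xs = xs' := by
  intro es
  induction es using List.reverseRecOn with
  | nil =>
    intro x xs xs' hc _ h1 _ _ _
    exact absurd (List.length_eq_zero_iff.mp h1) hc.ne_nil
  | append_singleton es0 f ih =>
    intro x xs xs' hc hc' h1 h2 hg hg'
    -- decompose xs and xs' as snoc
    obtain ⟨xs0, z, rfl⟩ : ∃ ys zz, xs = ys ++ [zz] := by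
      rcases List.eq_nil_or_concat xs with h | h
      · exact absurd h hc.ne_nil
      · obtain ⟨L,b,hb⟩ := h; exact ⟨L,b, by simpa using hb⟩
    obtain ⟨xs0', z', rfl⟩ : ∃ ys zz, xs' = ys ++ [zz] := by
      rcases List.eq_nil_or_concat xs' with h | h
      · exact absurd h hc'.ne_nil
      · obtain ⟨L,b,hb⟩ := h; exact ⟨L,b, by simpa using hb⟩
    have hl0 : xs0.length = es0.length := by simpa using h1
    have hl0' : xs0'.length = es0.length := by simpa using h2
    -- the last entries relate to f
    have hzf : (z, FPath.ofEdge f) ∈ R := by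
      have := hg ⟨xs0.length, by simp⟩
      simpa [List.get_eq_getElem, List.getElem_concat_length, hl0] using this
    have hzf' : (z', FPath.ofEdge f) ∈ R := by
      have := hg' ⟨xs0'.length, by simp⟩
      simpa [List.get_eq_getElem, List.getElem_concat_length, hl0'] using this
    rcases eq_or_ne xs0 ([] : List (FPath E)) with rfl | hne
    · -- then xs0' = [] too
      have he0 : es0 = [] := by simpa using hl0.symm
      have : xs0' = [] := List.length_eq_zero_iff.mp (by rw [hl0', he0]; rfl)
      subst this
      rcases hc.inv with ⟨_, rfl⟩ | ⟨w, _, hw, _⟩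
      · rcases hc'.inv with ⟨_, hz'⟩ | ⟨w, _, hw, _⟩
        · rw [hz']
        · exact absurd hw.ne_nil (by simp)
      · exact absurd hw.ne_nil (by simp)
    · have hne' : xs0' ≠ [] := by
        intro h; rw [h] at hl0'; simp at hl0'
        exact hne (List.length_eq_zero_iff.mp (by omega))
      obtain ⟨w, hw, hcw, rfl⟩ := isConcat_snoc hc hne
      obtain ⟨w', hw', hcw', heq⟩ := isConcat_snoc hc' hne'
      have hzz : z = z' := by
        have h4 := congrArg FPath.tgt heq
        simp only [FPath.comp_tgt] at h4
        exact hRt f z z' hzf hzf' h4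
      subst hzz
      have hww : w = w' := by
        refine FPath.ext'_s8 ?_ ?_
        · have h3 := congrArg FPath.src heq
          simp only [FPath.comp_src] at h3
          exact h3
        · have := congrArg FPath.edges heq
          simp only [FPath.comp_edges] at this
          exact List.append_cancel_right this
      subst hww
      have hxs0 : xs0 = xs0' := by
        refine ih w xs0 xs0' hcw hcw' hl0 hl0' ?_ ?_
        · intro i
          have := hg ⟨i.1, by simp⟩
          simpa [List.get_eq_getElem, List.getElem_append_left,
            List.getElem_append, i.2.trans_eq hl0] using this
        · intro i
          have := hg' ⟨i.1, by simp⟩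
          simpa [List.get_eq_getElem, List.getElem_append_left,
            List.getElem_append, i.2.trans_eq hl0'] using this
      rw [hxs0]

/-- unique middle path and unique decomposition for a composite of
vertex-disjoint target-injective relation morphisms with `R` decomposable. -/
theorem statement8 {E F G : DGraph} {R : GraphRel E F} {S : GraphRel F G}
    (hR : IsRelMorphism E F R) (hS : IsRelMorphism F G S)
    (hRv : RelVertexDisjoint R) (hSv : RelVertexDisjoint S)
    (hRt : RelTargetInj R) (hSt : RelTargetInj S)
    (hRd : RelDecomp R)
    (x : FPath E) (g : G.E) (hx : (x, FPath.ofEdge g) ∈ RelComp R S) :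
    (∃! y : FPath F, (y, FPath.ofEdge g) ∈ S ∧
      (FPath.ofVertex x.tgt, FPath.ofVertex y.tgt) ∈ R) ∧
    ∀ y : FPath F, (y, FPath.ofEdge g) ∈ S →
      (FPath.ofVertex x.tgt, FPath.ofVertex y.tgt) ∈ R → y.edges ≠ [] →
      ∃! xs : List (FPath E),
        IsConcat xs x ∧
        ∃ hlen : xs.length = y.edges.length,
          ∀ i : Fin xs.length,
            (xs.get i, FPath.ofEdge (y.edges.get (Fin.cast hlen i))) ∈ R := by
  obtain ⟨y0, hxy0, hy0g⟩ := hx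
  have key : ∀ y : FPath F, (y, FPath.ofEdge g) ∈ S →
      (FPath.ofVertex x.tgt, FPath.ofVertex y.tgt) ∈ R → y = y0 := by
    intro y hyS hyR
    have h0 : (FPath.ofVertex x.tgt, FPath.ofVertex y0.tgt) ∈ R := hR.tgt _ _ hxy0
    have htgt : y.tgt = y0.tgt := by
      by_contra hne
      exact hRv _ _ hne _ hyR h0
    exact hSt g y y0 hyS hy0g htgt
  constructor
  · exact ⟨y0, ⟨hy0g, hR.tgt _ _ hxy0⟩, fun y hy => key y hy.1 hy.2⟩
  · intro y hyS hyR hne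
    have hxy : (x, y) ∈ R := (key y hyS hyR) ▸ hxy0
    obtain ⟨xs, hc, hlen, hget⟩ := exists_decomp hRd y.edges y rfl x hxy hne
    refine ⟨xs, ⟨hc, hlen, hget⟩, ?_⟩
    rintro xs' ⟨hc', hlen', hget'⟩
    exact uniq_decomp hRt y.edges x xs' xs hc' hc hlen' hlen hget' hget
end

section
/- Let R : E → F be a relation morphism of directed graphs that is multiplicative and decomposable. Then R factors as R = R_φ ∘ R^ϑ, where G_R is the relation graph of R, ϑ : G_R → E is the path homomorphism induced by the projection onto the first component, and φ : G_R → F is the graph homomorphism induced by the projection onto the second component. -/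
section Aux

variable {E F : DGraph} {R : GraphRel E F} (hR : IsRelMorphism E F R)

theorem chainTheta : ∀ (l : List (relGraph R hR).E) (a b : (relGraph R hR).V),
    (relGraph R hR).chain a l b →
      E.chain a.1.1 (l.map fun e => e.1.1.edges).flatten b.1.1
  | [], a, _, h => by cases h; rfl
  | e :: es, a, b, h => by
    obtain ⟨h1, h2⟩ := h
    subst h1
    exact DGraph.chain_append e.1.1.chain (chainTheta es _ b h2)

theorem chainPhi : ∀ (l : List (relGraph R hR).E) (a b : (relGraph R hR).V),
    (relGraph R hR).chain a l b → F.chain a.1.2 (l.map fun e => e.1.2) b.1.2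
  | [], a, _, h => by cases h; rfl
  | e :: es, a, b, h => by
    obtain ⟨h1, h2⟩ := h
    subst h1
    exact ⟨rfl, chainPhi es _ b h2⟩

/-- The path homomorphism induced by the first projection. -/
def thetaP (z : FPath (relGraph R hR)) : FPath E :=
  ⟨z.src.1.1, z.tgt.1.1, (z.edges.map fun e => e.1.1.edges).flatten,
    chainTheta hR _ _ _ z.chain⟩

/-- The graph homomorphism induced by the second projection. -/
def phiP (z : FPath (relGraph R hR)) : FPath F :=
  ⟨z.src.1.2, z.tgt.1.2, z.edges.map fun e => e.1.2, chainPhi hR _ _ _ z.chain⟩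

theorem mem_aux : ∀ (l : List (relGraph R hR).E) (a b : (relGraph R hR).V)
    (hc : (relGraph R hR).chain a l b) (hm : RelMult R),
      (thetaP hR ⟨a, b, l, hc⟩, phiP hR ⟨a, b, l, hc⟩) ∈ R
  | [], a, b, hc, _ => by
    cases hc
    exact a.2
  | e :: es, a, b, hc, hm => by
    obtain ⟨h1, h2⟩ := hc
    subst h1
    have ih := mem_aux es _ b h2 hm
    have := hm e.1.1 (thetaP hR ⟨_, b, es, h2⟩) (FPath.ofEdge e.1.2)
      (phiP hR ⟨_, b, es, h2⟩) rfl rfl e.2 ih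
    convert this using 2 <;> exact FPath.ext' rfl rfl rfl

theorem surj_aux : ∀ (l : List F.E) (v w : F.V) (hc : F.chain v l w)
    (x : FPath E), (x, ⟨v, w, l, hc⟩) ∈ R → RelDecomp R →
      ∃ z, thetaP hR z = x ∧ phiP hR z = ⟨v, w, l, hc⟩
  | [], v, w, hc, x, hmem, _ => by
    cases hc
    have hxv : x.edges = [] := hR.vertex x _ hmem rfl
    have hxt : x.src = x.tgt := by
      have := x.chain
      rw [hxv] at this
      exact this
    refine ⟨FPath.ofVertex ⟨(x.src, v), hR.src x _ hmem⟩, ?_, rfl⟩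
    exact FPath.ext' rfl hxt hxv.symm
  | f :: fs, v, w, hc, x, hmem, hd => by
    obtain ⟨h1, h2⟩ := hc
    subst h1
    have hy : (⟨F.s f, w, f :: fs, ⟨rfl, h2⟩⟩ : FPath F) =
        (FPath.ofEdge f).comp ⟨F.t f, w, fs, h2⟩ rfl := FPath.ext' rfl rfl rfl
    rw [hy] at hmem
    obtain ⟨x₁, x₂, hx, mem₁, mem₂, heq⟩ := hd _ _ rfl x hmem
    obtain ⟨z₂, hθ, hφ⟩ := surj_aux fs (F.t f) w h2 x₂ mem₂ hd
    have hsrc1 : z₂.src.1.1 = x₂.src := congrArg FPath.src hθ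
    have hsrc2 : z₂.src.1.2 = (F.t f) := congrArg FPath.src hφ
    have hcomp : (FPath.ofEdge (⟨(x₁, f), mem₁⟩ : (relGraph R hR).E)).tgt = z₂.src := by
      apply Subtype.ext
      show (x₁.tgt, F.t f) = z₂.src.1
      rw [Prod.ext_iff]
      exact ⟨hx.trans hsrc1.symm, hsrc2.symm⟩
    refine ⟨(FPath.ofEdge (⟨(x₁, f), mem₁⟩ : (relGraph R hR).E)).comp z₂ hcomp, ?_, ?_⟩
    · rw [← heq]
      refine FPath.ext' ?_ ?_ ?_
      · rfl
      · have h := congrArg FPath.tgt hθ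
        exact h
      · show x₁.edges ++ ((z₂.edges.map fun e => e.1.1.edges).flatten) = _
        rw [show (z₂.edges.map fun e => e.1.1.edges).flatten = x₂.edges from
          congrArg FPath.edges hθ]
        rfl
    · refine FPath.ext' ?_ ?_ ?_
      · rfl
      · have h := congrArg FPath.tgt hφ
        exact h
      · show f :: (z₂.edges.map fun e => e.1.2) = f :: fs
        rw [show (z₂.edges.map fun e => e.1.2) = fs from congrArg FPath.edges hφ]

end Aux

/-- pullback-type factorization `R = R_φ ∘ R^θ` through the
relation graph `G_R`, with `θ`, `φ` induced by the two projections. -/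
theorem statement9 {E F : DGraph} {R : GraphRel E F} (hR : IsRelMorphism E F R)
    (hm : RelMult R) (hd : RelDecomp R) :
    ∃ (θ : FPath (relGraph R hR) → FPath E) (φ : FPath (relGraph R hR) → FPath F),
      IsPathHom θ ∧ IsGraphHom φ ∧
      (∀ v : (relGraph R hR).V, θ (FPath.ofVertex v) = FPath.ofVertex v.1.1) ∧
      (∀ e : (relGraph R hR).E, θ (FPath.ofEdge e) = e.1.1) ∧
      (∀ v : (relGraph R hR).V, φ (FPath.ofVertex v) = FPath.ofVertex v.1.2) ∧
      (∀ e : (relGraph R hR).E, φ (FPath.ofEdge e) = FPath.ofEdge e.1.2) ∧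
      R = RelComp (relOfCofun θ) (relOfFun φ) := by
  refine ⟨thetaP hR, phiP hR, ?_, ⟨?_, ?_⟩, ?_, ?_, ?_, ?_, ?_⟩
  · refine ⟨?_, fun x => rfl, fun x => rfl, fun x x' h h' => ?_⟩
    · intro x hx
      show ((x.edges.map fun e => e.1.1.edges).flatten) = []
      rw [hx]; rfl
    · exact FPath.ext' rfl rfl (by simp [thetaP, FPath.comp])
  · refine ⟨?_, fun x => rfl, fun x => rfl, fun x x' h h' => ?_⟩
    · intro x hx
      show (x.edges.map fun e => e.1.2) = []
      rw [hx]; rfl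
    · exact FPath.ext' rfl rfl (by simp [phiP, FPath.comp])
  · intro x
    show (phiP hR x).edges.length = x.edges.length
    simp [phiP]
  · intro v; rfl
  · intro e; exact FPath.ext' rfl rfl (by simp [thetaP, FPath.ofEdge])
  · intro v; rfl
  · intro e; rfl
  · ext ⟨x, y⟩
    constructor
    · intro hxy
      obtain ⟨z, hθ, hφ⟩ := surj_aux hR y.edges y.src y.tgt y.chain x
        (by convert hxy using 2) hd
      exact ⟨z, hθ.symm, hφ.symm⟩
    · rintro ⟨z, h1, h2⟩
      rw [show x = thetaP hR z from h1, show y = phiP hR z from h2]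
      have := mem_aux hR z.edges z.src z.tgt z.chain hm
      convert this using 2
end

section
/- Let E, F be directed graphs, S⁰ ⊆ E⁰ × F⁰ and S¹ ⊆ FP(E) × F¹ be subsets such that (s_PE(x), s_F(f)) ∈ S⁰ and (t_PE(x), t_F(f)) ∈ S⁰ for all (x,f) ∈ S¹. Then there exists a unique multiplicative and decomposable relation morphism R : E → F whose relation graph satisfies G_R⁰ = S⁰ and G_R¹ = S¹; explicitly, R consists of S⁰ together with all pairs (x₁⋯x_n, f₁⋯f_n) with (x_i, f_i) ∈ S¹ and the concatenations defined. Moreover, every multiplicative and decomposable relation morphism arises this way. -/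
section Statement12Aux

namespace FPath

variable {G : DGraph}

theorem ext'_s12 : ∀ {x y : FPath G}, x.src = y.src → x.tgt = y.tgt → x.edges = y.edges → x = y
  | ⟨_, _, _, _⟩, ⟨_, _, _, _⟩, rfl, rfl, rfl => rfl

theorem vertex_eq {x : FPath G} (h : x.IsVertex) : x.src = x.tgt := by
  rcases x with ⟨u, w, l, hc⟩
  cases (h : l = [])
  exact hc

theorem eq_ofVertex {x : FPath G} (h : x.IsVertex) : x = ofVertex x.src :=
  ext'_s12 rfl (vertex_eq h).symm h

theorem src_eq {x : FPath G} (h : x.edges ≠ []) : x.src = G.s (x.edges.head h) := by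
  rcases x with ⟨u, w, l, hc⟩
  cases l with
  | nil => exact absurd rfl h
  | cons e es => exact hc.1.symm

theorem chain_getLast : ∀ {l : List G.E} {u w : G.V}, G.chain u l w → ∀ (h : l ≠ []),
    w = G.t (l.getLast h)
  | [], _, _, _, h => absurd rfl h
  | [e], _, _, hc, _ => (hc.2 : G.t e = _).symm
  | e :: e' :: es, _, _, hc, _ => by
      rw [List.getLast_cons (by simp)]
      exact chain_getLast hc.2 (by simp)

theorem tgt_eq {x : FPath G} (h : x.edges ≠ []) : x.tgt = G.t (x.edges.getLast h) :=
  chain_getLast x.chain h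

theorem comp_vertex_left {x y : FPath G} (hx : x.IsVertex) (h : x.tgt = y.src) :
    x.comp y h = y :=
  ext'_s12 ((vertex_eq hx).trans h) rfl (by show x.edges ++ y.edges = y.edges; rw [(hx : x.edges = [])]; rfl)

theorem comp_vertex_right {x y : FPath G} (hy : y.IsVertex) (h : x.tgt = y.src) :
    x.comp y h = x :=
  ext'_s12 rfl ((vertex_eq hy).symm.trans h.symm)
    (by show x.edges ++ y.edges = x.edges; rw [(hy : y.edges = [])]; simp)

theorem comp_assoc (x y z : FPath G) (h1 : x.tgt = y.src) (h2 : y.tgt = z.src) :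
    (x.comp y h1).comp z h2 = x.comp (y.comp z h2) h1 :=
  ext'_s12 rfl rfl (List.append_assoc ..)

theorem eq_ofEdge {y : FPath G} {f : G.E} (he : y.edges = [f]) : y = ofEdge f := by
  rcases y with ⟨u, w, l, hc⟩
  cases he
  exact ext'_s12 hc.1.symm (hc.2 : G.t f = w).symm rfl

theorem eq_comp {y : FPath G} {f : G.E} {fs : List G.E} (he : y.edges = f :: fs) :
    ∃ (y' : FPath G) (h : (ofEdge f).tgt = y'.src),
      y'.edges = fs ∧ y = (ofEdge f).comp y' h := by
  rcases y with ⟨u, w, l, hc⟩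
  cases he
  exact ⟨⟨G.t f, w, fs, hc.2⟩, rfl, rfl, ext'_s12 hc.1.symm rfl rfl⟩

end FPath

namespace IsConcat

variable {G : DGraph}

theorem ne_nil_s12 {xs : List (FPath G)} {x : FPath G} (h : IsConcat xs x) : xs ≠ [] := by
  cases h <;> simp

theorem head_src {xs : List (FPath G)} {x : FPath G} (h : IsConcat xs x) (hne : xs ≠ []) :
    x.src = (xs.head hne).src := by
  cases h with
  | single => rfl
  | cons => rfl

theorem getLast_tgt : ∀ {xs : List (FPath G)} {x : FPath G}, IsConcat xs x →
    ∀ (hne : xs ≠ []), x.tgt = (xs.getLast hne).tgt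
  | _, _, .single x, _ => rfl
  | _, _, .cons x (xs := xs) (y := y) h hrest, _ => by
      rw [List.getLast_cons hrest.ne_nil_s12]
      exact getLast_tgt hrest hrest.ne_nil_s12

theorem append : ∀ {xs ys : List (FPath G)} {x y : FPath G},
    IsConcat xs x → IsConcat ys y → ∀ (h : x.tgt = y.src), IsConcat (xs ++ ys) (x.comp y h)
  | _, ys, _, y, .single x, hy, h => .cons x h hy
  | _, ys, _, y, .cons x (xs := xs) (y := z) h' hrest, hy, h => by
      have hres : IsConcat (x :: (xs ++ ys)) (x.comp (z.comp y h) h') :=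
        .cons x (y := z.comp y h) h' (append hrest hy h)
      rw [FPath.comp_assoc x z y h' h]; exact hres

theorem split : ∀ (xs : List (FPath G)) {ys : List (FPath G)} {z : FPath G},
    IsConcat (xs ++ ys) z → xs ≠ [] → ys ≠ [] →
    ∃ (x y : FPath G) (h : x.tgt = y.src), IsConcat xs x ∧ IsConcat ys y ∧ x.comp y h = z
  | [], _, _, _, hxs, _ => absurd rfl hxs
  | [a], ys, z, h, _, hys => by
      cases h with
      | single => exact absurd rfl hys
      | cons _ hh inner => exact ⟨a, _, hh, .single a, inner, rfl⟩
  | a :: b :: rest, ys, z, h, _, hys => by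
      cases h with
      | cons _ hh inner =>
        obtain ⟨x, y, hcomp, h1, h2, rfl⟩ := split (b :: rest) inner (by simp) hys
        have hh' : a.tgt = x.src := hh
        exact ⟨a.comp x hh', y, hcomp, .cons a hh' h1, h2,
          FPath.comp_assoc a x y hh' hcomp⟩

end IsConcat

theorem forall₂_head {α β : Type*} {R : α → β → Prop} {l1 : List α} {l2 : List β}
    (h : List.Forall₂ R l1 l2) (h1 : l1 ≠ []) (h2 : l2 ≠ []) : R (l1.head h1) (l2.head h2) := by
  cases h with
  | nil => exact absurd rfl h1
  | cons hab _ => exact hab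

theorem forall₂_getLast {α β : Type*} {R : α → β → Prop} :
    ∀ {l1 : List α} {l2 : List β}, List.Forall₂ R l1 l2 →
      ∀ (h1 : l1 ≠ []) (h2 : l2 ≠ []), R (l1.getLast h1) (l2.getLast h2)
  | [_], [_], h, _, _ => by cases h with | cons hab _ => exact hab
  | a :: a' :: l1, b :: b' :: l2, h, _, _ => by
      cases h with
      | cons hab htl =>
        rw [List.getLast_cons (List.cons_ne_nil a' l1), List.getLast_cons (List.cons_ne_nil b' l2)]
        exact forall₂_getLast htl (List.cons_ne_nil a' l1) (List.cons_ne_nil b' l2)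
  | [], _, _, h1, _ => absurd rfl h1
  | _ :: _, [], _, _, h2 => absurd rfl h2
  | [_], _ :: _ :: _, h, _, _ => by cases h with | cons _ htl => cases htl
  | _ :: _ :: _, [_], h, _, _ => by cases h with | cons _ htl => cases htl

theorem fin_forall₂ {α β : Type*} (P : α → β → Prop) (xs : List α) (l : List β) :
    (∃ hlen : xs.length = l.length, ∀ i : Fin xs.length, P (xs.get i) (l.get (Fin.cast hlen i))) ↔
      List.Forall₂ P xs l := by
  rw [List.forall₂_iff_get]
  constructor
  · rintro ⟨hlen, hi⟩; exact ⟨hlen, fun i h1 h2 => hi ⟨i, h1⟩⟩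
  · rintro ⟨hlen, hi⟩; exact ⟨hlen, fun i => hi i i.2 (by omega)⟩

end Statement12Aux

section Statement12Gen

variable {E F : DGraph}

/-- The concatenation part of the generated relation. -/
def ConcatRel (S1 : Set (FPath E × F.E)) (q : FPath E × FPath F) : Prop :=
  ∃ xs : List (FPath E), IsConcat xs q.1 ∧
    ∃ hlen : xs.length = q.2.edges.length,
      ∀ i : Fin xs.length, (xs.get i, q.2.edges.get (Fin.cast hlen i)) ∈ S1

theorem concatRel_iff (S1 : Set (FPath E × F.E)) (q : FPath E × FPath F) :
    ConcatRel S1 q ↔ ∃ xs : List (FPath E), IsConcat xs q.1 ∧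
      List.Forall₂ (fun a b => (a, b) ∈ S1) xs q.2.edges :=
  exists_congr fun xs => and_congr_right fun _ =>
    fin_forall₂ (fun a b => (a, b) ∈ S1) xs q.2.edges

/-- The relation generated by vertex data `S0` and edge data `S1`. -/
def Gen (S0 : Set (E.V × F.V)) (S1 : Set (FPath E × F.E)) : GraphRel E F :=
  {q | (q.1.IsVertex ∧ q.2.IsVertex ∧ (q.1.src, q.2.src) ∈ S0) ∨ ConcatRel S1 q}

variable {S0 : Set (E.V × F.V)} {S1 : Set (FPath E × F.E)}

theorem mem_gen (q : FPath E × FPath F) :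
    q ∈ Gen S0 S1 ↔ (q.1.IsVertex ∧ q.2.IsVertex ∧ (q.1.src, q.2.src) ∈ S0) ∨
      ∃ xs, IsConcat xs q.1 ∧ List.Forall₂ (fun a b => (a, b) ∈ S1) xs q.2.edges :=
  or_congr Iff.rfl (concatRel_iff S1 q)

theorem gen_not_vertex {x : FPath E} {y : FPath F} {xs : List (FPath E)}
    (hc : IsConcat xs x) (hf : List.Forall₂ (fun a b => (a, b) ∈ S1) xs y.edges) :
    y.edges ≠ [] := by
  intro h
  rw [h] at hf
  cases hf
  exact hc.ne_nil_s12 rfl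

theorem gen_isRelMorphism
    (hS : ∀ p ∈ S1, (p.1.src, F.s p.2) ∈ S0 ∧ (p.1.tgt, F.t p.2) ∈ S0) :
    IsRelMorphism E F (Gen S0 S1) where
  vertex x y hxy hy := by
    rcases (mem_gen _).1 hxy with ⟨hx, _, _⟩ | ⟨xs, hc, hf⟩
    · exact hx
    · exact absurd hy (gen_not_vertex hc hf)
  src x y hxy := by
    refine (mem_gen _).2 (Or.inl ⟨rfl, rfl, ?_⟩)
    show (x.src, y.src) ∈ S0
    rcases (mem_gen _).1 hxy with ⟨_, _, m⟩ | ⟨xs, hc, hf⟩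
    · exact m
    · have hne : xs ≠ [] := hc.ne_nil_s12
      have hye : y.edges ≠ [] := gen_not_vertex hc hf
      have h0 := (hS _ (forall₂_head hf hne hye)).1
      rw [hc.head_src hne, FPath.src_eq hye]
      exact h0
  tgt x y hxy := by
    refine (mem_gen _).2 (Or.inl ⟨rfl, rfl, ?_⟩)
    show (x.tgt, y.tgt) ∈ S0
    rcases (mem_gen _).1 hxy with ⟨vx, vy, m⟩ | ⟨xs, hc, hf⟩
    · rw [← FPath.vertex_eq vx, ← FPath.vertex_eq vy]; exact m
    · have hne : xs ≠ [] := hc.ne_nil_s12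
      have hye : y.edges ≠ [] := gen_not_vertex hc hf
      have h0 := (hS _ (forall₂_getLast hf hne hye)).2
      rw [hc.getLast_tgt hne, FPath.tgt_eq hye]
      exact h0

theorem gen_relMult : RelMult (Gen S0 S1) := by
  intro x x' y y' hx hy hxy hxy'
  rcases (mem_gen _).1 hxy with ⟨vx, vy, m⟩ | ⟨xs, hc, hf⟩
  · rw [FPath.comp_vertex_left vx, FPath.comp_vertex_left vy]
    exact hxy'
  · rcases (mem_gen _).1 hxy' with ⟨vx', vy', m'⟩ | ⟨xs', hc', hf'⟩
    · rw [FPath.comp_vertex_right vx', FPath.comp_vertex_right vy']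
      exact hxy
    · refine (mem_gen _).2 (Or.inr ⟨xs ++ xs', hc.append hc' hx, ?_⟩)
      exact List.rel_append hf hf'

theorem gen_relDecomp
    (hS : ∀ p ∈ S1, (p.1.src, F.s p.2) ∈ S0 ∧ (p.1.tgt, F.t p.2) ∈ S0) :
    RelDecomp (Gen S0 S1) := by
  intro y y' h xb hmem
  rcases (mem_gen _).1 hmem with ⟨vx, vy, m⟩ | ⟨xs, hc, hf⟩
  · have h2 : y.edges ++ y'.edges = [] := vy
    rw [List.append_eq_nil_iff] at h2
    refine ⟨xb, xb, (FPath.vertex_eq vx).symm, ?_, ?_, FPath.comp_vertex_left vx _⟩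
    · exact (mem_gen _).2 (Or.inl ⟨vx, h2.1, m⟩)
    · refine (mem_gen _).2 (Or.inl ⟨vx, h2.2, ?_⟩)
      show (xb.src, y'.src) ∈ S0
      rw [← h, ← FPath.vertex_eq h2.1]
      exact m
  · have hf' : List.Forall₂ (fun a b => (a, b) ∈ S1) xs (y.edges ++ y'.edges) := hf
    by_cases hl : y.edges = []
    · by_cases hl' : y'.edges = []
      · exfalso
        rw [hl, hl'] at hf'
        cases hf'
        exact hc.ne_nil_s12 rfl
      · rw [hl, List.nil_append] at hf'
        refine ⟨FPath.ofVertex xb.src, xb, rfl, ?_, ?_,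
          FPath.comp_vertex_left (show (FPath.ofVertex xb.src).IsVertex from rfl) _⟩
        · refine (mem_gen _).2 (Or.inl ⟨rfl, hl, ?_⟩)
          show (xb.src, y.src) ∈ S0
          have h0 := (hS _ (forall₂_head hf' hc.ne_nil_s12 hl')).1
          rw [hc.head_src hc.ne_nil_s12,
            show y.src = y'.src from (FPath.vertex_eq hl).trans h, FPath.src_eq hl']
          exact h0
        · exact (mem_gen _).2 (Or.inr ⟨xs, hc, hf'⟩)
    · by_cases hl' : y'.edges = []
      · rw [hl', List.append_nil] at hf'
        refine ⟨xb, FPath.ofVertex xb.tgt, rfl, ?_, ?_,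
          FPath.comp_vertex_right (show (FPath.ofVertex xb.tgt).IsVertex from rfl) _⟩
        · exact (mem_gen _).2 (Or.inr ⟨xs, hc, hf'⟩)
        · refine (mem_gen _).2 (Or.inl ⟨rfl, hl', ?_⟩)
          show (xb.tgt, y'.src) ∈ S0
          have h0 := (hS _ (forall₂_getLast hf' hc.ne_nil_s12 hl)).2
          rw [hc.getLast_tgt hc.ne_nil_s12, ← h, FPath.tgt_eq hl]
          exact h0
      · have hfa := List.forall₂_take_append xs y.edges y'.edges hf'
        have hfb := List.forall₂_drop_append xs y.edges y'.edges hf'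
        have hc2 : IsConcat (xs.take y.edges.length ++ xs.drop y.edges.length) xb := by
          rw [List.take_append_drop]; exact hc
        have hta : xs.take y.edges.length ≠ [] := by
          intro hcon
          have hlen := hfa.length_eq
          rw [hcon] at hlen
          exact hl (List.length_eq_zero_iff.mp hlen.symm)
        have htb : xs.drop y.edges.length ≠ [] := by
          intro hcon
          have hlen := hfb.length_eq
          rw [hcon] at hlen
          exact hl' (List.length_eq_zero_iff.mp hlen.symm)
        obtain ⟨x, x', hx, h1, h2, heq⟩ := IsConcat.split _ hc2 hta htb
        exact ⟨x, x', hx, (mem_gen _).2 (Or.inr ⟨_, h1, hfa⟩),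
          (mem_gen _).2 (Or.inr ⟨_, h2, hfb⟩), heq⟩

theorem IsConcat.eq_single {G : DGraph} {a x : FPath G} (h : IsConcat [a] x) : x = a := by
  cases h with
  | single => rfl
  | cons _ _ inner => exact absurd rfl inner.ne_nil_s12

theorem gen_cond4 (v : E.V × F.V) :
    (FPath.ofVertex v.1, FPath.ofVertex v.2) ∈ Gen S0 S1 ↔ v ∈ S0 := by
  rw [mem_gen]
  constructor
  · rintro (⟨_, _, m⟩ | ⟨xs, hc, hf⟩)
    · exact m
    · exact absurd rfl (gen_not_vertex hc hf)
  · intro hv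
    exact Or.inl ⟨rfl, rfl, hv⟩

theorem gen_cond5 (p : FPath E × F.E) :
    (p.1, FPath.ofEdge p.2) ∈ Gen S0 S1 ↔ p ∈ S1 := by
  obtain ⟨x, e⟩ := p
  rw [mem_gen]
  constructor
  · rintro (⟨_, hv, _⟩ | ⟨xs, hc, hf⟩)
    · exact absurd (hv : (FPath.ofEdge e).edges = [])
        (by intro hcon; exact List.cons_ne_nil e [] hcon)
    · have hf' : List.Forall₂ (fun a b => (a, b) ∈ S1) xs [e] := hf
      cases hf' with
      | cons hab htl =>
        cases htl
        obtain rfl := hc.eq_single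
        exact hab
  · intro hp
    refine Or.inr ⟨[x], .single x, ?_⟩
    show List.Forall₂ (fun a b => (a, b) ∈ S1) [x] [e]
    exact .cons hp .nil

section
variable {R : GraphRel E F}

theorem rel_assemble (hmult : RelMult R) :
    ∀ {xs : List (FPath E)} {x : FPath E}, IsConcat xs x → ∀ (y : FPath F),
      List.Forall₂ (fun a f => (a, FPath.ofEdge f) ∈ R) xs y.edges → (x, y) ∈ R := by
  intro xs x hc
  induction hc with
  | single x =>
    intro y hf
    cases hy : y.edges with
    | nil => rw [hy] at hf; cases hf
    | cons f fs =>
      rw [hy] at hf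
      cases hf with
      | cons hab htl =>
        cases htl
        rw [FPath.eq_ofEdge hy]
        exact hab
  | cons x h hrest ih =>
    intro y hf
    cases hy : y.edges with
    | nil => rw [hy] at hf; cases hf
    | cons f fs =>
      rw [hy] at hf
      cases hf with
      | cons hab htl =>
        obtain ⟨y', hcomp, hfs, hyeq⟩ := FPath.eq_comp hy
        rw [hyeq]
        exact hmult _ _ _ _ h hcomp hab (ih y' (by rw [hfs]; exact htl))

theorem rel_disassemble (hdec : RelDecomp R) :
    ∀ (l : List F.E) (f : F.E) (x : FPath E) (y : FPath F), y.edges = f :: l → (x, y) ∈ R →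
      ∃ xs, IsConcat xs x ∧
        List.Forall₂ (fun a g => (a, FPath.ofEdge g) ∈ R) xs y.edges := by
  intro l
  induction l with
  | nil =>
    intro f x y hy hm
    refine ⟨[x], .single x, ?_⟩
    rw [hy]
    exact .cons (by rw [← FPath.eq_ofEdge hy]; exact hm) .nil
  | cons f' fs ih =>
    intro f x y hy hm
    obtain ⟨y', hcomp, hfs, hyeq⟩ := FPath.eq_comp hy
    rw [hyeq] at hm
    obtain ⟨x1, x2, hx, m1, m2, heq⟩ := hdec _ _ _ _ hm
    obtain ⟨xs2, hc2, hf2⟩ := ih f' x2 y' hfs m2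
    refine ⟨x1 :: xs2, ?_, ?_⟩
    · rw [← heq]; exact .cons x1 hx hc2
    · rw [hy]
      exact .cons m1 (by rw [hfs] at hf2; exact hf2)

theorem rel_char (hm : IsRelMorphism E F R) (hmult : RelMult R) (hdec : RelDecomp R)
    (q : FPath E × FPath F) :
    q ∈ R ↔ ((q.1.IsVertex ∧ q.2.IsVertex ∧
        (FPath.ofVertex q.1.src, FPath.ofVertex q.2.src) ∈ R) ∨
      ∃ xs, IsConcat xs q.1 ∧
        List.Forall₂ (fun a g => (a, FPath.ofEdge g) ∈ R) xs q.2.edges) := by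
  obtain ⟨x, y⟩ := q
  constructor
  · intro hq
    cases hy : y.edges with
    | nil => exact Or.inl ⟨hm.vertex x y hq hy, hy, hm.src x y hq⟩
    | cons f fs =>
      obtain ⟨xs, hcc, hff⟩ := rel_disassemble hdec fs f x y hy hq
      rw [hy] at hff
      exact Or.inr ⟨xs, hcc, hff⟩
  · rintro (⟨vx, vy, m⟩ | ⟨xs, hc, hf⟩)
    · have e1 : x = FPath.ofVertex x.src := FPath.eq_ofVertex vx
      have e2 : y = FPath.ofVertex y.src := FPath.eq_ofVertex vy
      rw [e1, e2]
      exact m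
    · exact rel_assemble hmult hc y hf

end

end Statement12Gen

/-- generation of a multiplicative decomposable relation morphism
from vertex data `S⁰` and edge data `S¹`, and the fact that every multiplicative
decomposable relation morphism is generated by its vertex and edge parts. -/
theorem statement12 {E F : DGraph} (S0 : Set (E.V × F.V)) (S1 : Set (FPath E × F.E))
    (hS : ∀ p ∈ S1, (p.1.src, F.s p.2) ∈ S0 ∧ (p.1.tgt, F.t p.2) ∈ S0) :
    (∃! R : GraphRel E F,
      IsRelMorphism E F R ∧ RelMult R ∧ RelDecomp R ∧
      (∀ v : E.V × F.V, (FPath.ofVertex v.1, FPath.ofVertex v.2) ∈ R ↔ v ∈ S0) ∧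
      (∀ p : FPath E × F.E, (p.1, FPath.ofEdge p.2) ∈ R ↔ p ∈ S1) ∧
      (∀ q : FPath E × FPath F, q ∈ R ↔
        ((q.1.IsVertex ∧ q.2.IsVertex ∧ (q.1.src, q.2.src) ∈ S0) ∨
         ∃ xs : List (FPath E), IsConcat xs q.1 ∧
           ∃ hlen : xs.length = q.2.edges.length,
             ∀ i : Fin xs.length,
               (xs.get i, q.2.edges.get (Fin.cast hlen i)) ∈ S1))) ∧
    (∀ R : GraphRel E F, IsRelMorphism E F R → RelMult R → RelDecomp R →
      ∀ q : FPath E × FPath F, q ∈ R ↔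
        ((q.1.IsVertex ∧ q.2.IsVertex ∧
            (FPath.ofVertex q.1.src, FPath.ofVertex q.2.src) ∈ R) ∨
         ∃ xs : List (FPath E), IsConcat xs q.1 ∧
           ∃ hlen : xs.length = q.2.edges.length,
             ∀ i : Fin xs.length,
               (xs.get i, FPath.ofEdge (q.2.edges.get (Fin.cast hlen i))) ∈ R)) := by
  constructor
  · refine ⟨Gen S0 S1, ⟨gen_isRelMorphism hS, gen_relMult, gen_relDecomp hS, gen_cond4,
      gen_cond5, fun q => Iff.rfl⟩, ?_⟩
    rintro R ⟨-, -, -, -, -, h6⟩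
    exact Set.ext fun q => h6 q
  · intro R hm hmult hdec q
    rw [rel_char hm hmult hdec q]
    exact or_congr Iff.rfl (exists_congr fun xs => and_congr_right fun _ =>
      (fin_forall₂ (fun a g => (a, FPath.ofEdge g) ∈ R) xs q.2.edges).symm)
end

section
/- Let R : E → F be a relation morphism of directed graphs that is multiplicative, decomposable, proper and vertex disjoint. Then the assignment S_v ↦ Σ_{u ∈ R⁻¹(v)} S_u for vertices v ∈ F⁰ and S_f ↦ Σ_{x ∈ R⁻¹(f)} S_x for edges f ∈ F¹ extends to an algebra homomorphism R*_P : kF → kE between the path algebras, i.e., these images satisfy the path algebra relations: the images of distinct vertices are orthogonal idempotents, and the image of each edge f satisfies S_{s(f)}·S_f = S_f = S_f·S_{t(f)} after applying R*_P. -/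
open Sum in
/-- The defining relations of the path algebra of a graph, imposed on the free
algebra on generators indexed by vertices and edges. -/
inductive PathRel (k : Type) [Field k] (G : DGraph) :
    FreeAlgebra k (G.V ⊕ G.E) → FreeAlgebra k (G.V ⊕ G.E) → Prop
  | vertOrth (v w : G.V) (h : v ≠ w) :
      PathRel k G (FreeAlgebra.ι k (inl v) * FreeAlgebra.ι k (inl w)) 0
  | vertIdem (v : G.V) :
      PathRel k G (FreeAlgebra.ι k (inl v) * FreeAlgebra.ι k (inl v))
        (FreeAlgebra.ι k (inl v))
  | srcMul (e : G.E) :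
      PathRel k G (FreeAlgebra.ι k (inl (G.s e)) * FreeAlgebra.ι k (inr e))
        (FreeAlgebra.ι k (inr e))
  | mulTgt (e : G.E) :
      PathRel k G (FreeAlgebra.ι k (inr e) * FreeAlgebra.ι k (inl (G.t e)))
        (FreeAlgebra.ι k (inr e))

/-- The path algebra `kG` of a directed graph `G` over a field `k`. -/
abbrev PathAlg (k : Type) [Field k] (G : DGraph) := RingQuot (PathRel k G)

/-- The basis element `S_x` of the path algebra associated to a finite path `x`. -/
noncomputable def Sgen (k : Type) [Field k] (G : DGraph) (x : FPath G) : PathAlg k G :=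
  if x.edges.isEmpty then
    RingQuot.mkAlgHom k (PathRel k G) (FreeAlgebra.ι k (Sum.inl x.src))
  else
    (x.edges.map fun e =>
      RingQuot.mkAlgHom k (PathRel k G) (FreeAlgebra.ι k (Sum.inr e))).prod

section Statement13Aux

variable {k : Type} [Field k] {G : DGraph}

open Sum
open scoped Classical

/-- The vertex generator of the path algebra. -/
noncomputable def Vgen (k : Type) [Field k] (G : DGraph) (v : G.V) : PathAlg k G :=
  RingQuot.mkAlgHom k (PathRel k G) (FreeAlgebra.ι k (Sum.inl v))

/-- The edge generator of the path algebra. -/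
noncomputable def Egen (k : Type) [Field k] (G : DGraph) (e : G.E) : PathAlg k G :=
  RingQuot.mkAlgHom k (PathRel k G) (FreeAlgebra.ι k (Sum.inr e))

/-- The product of edge generators along a list of edges. -/
noncomputable def Pprod (k : Type) [Field k] (G : DGraph) (l : List G.E) : PathAlg k G :=
  (l.map (Egen k G)).prod

@[simp] lemma Pprod_nil : Pprod k G [] = 1 := rfl

lemma Pprod_cons (e : G.E) (l : List G.E) :
    Pprod k G (e :: l) = Egen k G e * Pprod k G l := by
  simp [Pprod]

lemma Vgen_mul (v w : G.V) :
    Vgen k G v * Vgen k G w = if v = w then Vgen k G v else 0 := by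
  split_ifs with h
  · subst h
    rw [Vgen, ← map_mul]
    exact RingQuot.mkAlgHom_rel k (PathRel.vertIdem v)
  · have h0 := RingQuot.mkAlgHom_rel k (PathRel.vertOrth (k := k) (G := G) v w h)
    rw [map_mul, map_zero] at h0
    exact h0

lemma Vgen_mul_Egen (e : G.E) : Vgen k G (G.s e) * Egen k G e = Egen k G e := by
  rw [Vgen, Egen, ← map_mul]
  exact RingQuot.mkAlgHom_rel k (PathRel.srcMul e)

lemma Egen_mul_Vgen (e : G.E) : Egen k G e * Vgen k G (G.t e) = Egen k G e := by
  rw [Vgen, Egen, ← map_mul]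
  exact RingQuot.mkAlgHom_rel k (PathRel.mulTgt e)

lemma Vgen_mul_Egen' (v : G.V) (e : G.E) :
    Vgen k G v * Egen k G e = if v = G.s e then Egen k G e else 0 := by
  conv_lhs => rw [← Vgen_mul_Egen e, ← mul_assoc, Vgen_mul]
  split_ifs with h
  · rw [h, Vgen_mul_Egen]
  · rw [zero_mul]

lemma Egen_mul_Vgen' (e : G.E) (v : G.V) :
    Egen k G e * Vgen k G v = if G.t e = v then Egen k G e else 0 := by
  conv_lhs => rw [← Egen_mul_Vgen e, mul_assoc, Vgen_mul]
  split_ifs with h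
  · exact Egen_mul_Vgen e
  · rw [mul_zero]

lemma Vgen_mul_Pprod {l : List G.E} (hl : l ≠ []) {u w : G.V} (hc : G.chain u l w)
    (v : G.V) : Vgen k G v * Pprod k G l = if v = u then Pprod k G l else 0 := by
  match l, hl with
  | e :: es, _ =>
    obtain ⟨hse, -⟩ := hc
    rw [Pprod_cons, ← mul_assoc, Vgen_mul_Egen', hse, ite_mul, zero_mul, ← Pprod_cons]

lemma Pprod_mul_Vgen_aux :
    ∀ (es : List G.E) (e : G.E) {u w : G.V}, G.chain u (e :: es) w → ∀ v : G.V,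
      Pprod k G (e :: es) * Vgen k G v = if w = v then Pprod k G (e :: es) else 0 := by
  intro es
  induction es with
  | nil =>
    intro e u w hc v
    obtain ⟨-, hw⟩ := hc
    have hw' : G.t e = w := hw
    rw [Pprod_cons, Pprod_nil, mul_one, Egen_mul_Vgen', hw']
  | cons e' es ih =>
    intro e u w hc v
    obtain ⟨-, hc2⟩ := hc
    rw [Pprod_cons, mul_assoc, ih e' hc2 v, mul_ite, mul_zero, ← Pprod_cons]

lemma Pprod_mul_Vgen {l : List G.E} (hl : l ≠ []) {u w : G.V} (hc : G.chain u l w)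
    (v : G.V) : Pprod k G l * Vgen k G v = if w = v then Pprod k G l else 0 := by
  match l, hl with
  | e :: es, _ => exact Pprod_mul_Vgen_aux es e hc v

lemma Sgen_of_nil {x : FPath G} (h : x.edges = []) :
    Sgen k G x = Vgen k G x.src := by
  simp [Sgen, Vgen, h]

lemma Sgen_of_ne_nil {x : FPath G} (h : x.edges ≠ []) :
    Sgen k G x = Pprod k G x.edges := by
  simp only [Sgen, List.isEmpty_iff, h, if_false]
  rfl

lemma Sgen_ofVertex (v : G.V) : Sgen k G (FPath.ofVertex v) = Vgen k G v :=
  Sgen_of_nil rfl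

lemma Sgen_ofEdge (e : G.E) : Sgen k G (FPath.ofEdge e) = Egen k G e := by
  rw [Sgen_of_ne_nil (by simp [FPath.ofEdge])]
  show Pprod k G [e] = _
  rw [Pprod_cons, Pprod_nil, mul_one]

lemma eq_ofVertex {x : FPath G} (h : x.edges = []) : x = FPath.ofVertex x.src := by
  obtain ⟨s, t, l, hc⟩ := x
  dsimp only at h
  subst h
  have hst : s = t := hc
  subst hst
  rfl

lemma src_eq_tgt {x : FPath G} (h : x.edges = []) : x.src = x.tgt := by
  have hc := x.chain
  rw [h] at hc
  exact hc

lemma Vgen_mul_Sgen (v : G.V) (x : FPath G) :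
    Sgen k G (FPath.ofVertex v) * Sgen k G x = if v = x.src then Sgen k G x else 0 := by
  rw [Sgen_ofVertex]
  by_cases h : x.edges = []
  · rw [Sgen_of_nil h, Vgen_mul]
    split_ifs with h2
    · rw [h2]
    · rfl
  · rw [Sgen_of_ne_nil h]
    exact Vgen_mul_Pprod h x.chain v

lemma Sgen_mul_Vgen (x : FPath G) (v : G.V) :
    Sgen k G x * Sgen k G (FPath.ofVertex v) = if x.tgt = v then Sgen k G x else 0 := by
  rw [Sgen_ofVertex]
  by_cases h : x.edges = []
  · rw [Sgen_of_nil h, Vgen_mul, src_eq_tgt h]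
  · rw [Sgen_of_ne_nil h]
    exact Pprod_mul_Vgen h x.chain v

end Statement13Aux

/-- a multiplicative, decomposable, proper and vertex-disjoint
relation morphism `R : E → F` induces an algebra homomorphism `R*_P : kF → kE`
with `S_y ↦ Σ_{x ∈ R⁻¹(y)} S_x` on vertices and edges. -/
theorem statement13 (k : Type) [Field k] {E F : DGraph} {R : GraphRel E F}
    (hR : IsRelMorphism E F R) (hm : RelMult R) (hd : RelDecomp R)
    (hp : RelProper R) (hv : RelVertexDisjoint R) :
    ∃ h : PathAlg k F →ₐ[k] PathAlg k E,
      (∀ v : F.V, h (Sgen k F (FPath.ofVertex v)) =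
        ∑ x ∈ (hp (FPath.ofVertex v)).toFinset, Sgen k E x) ∧
      (∀ f : F.E, h (Sgen k F (FPath.ofEdge f)) =
        ∑ x ∈ (hp (FPath.ofEdge f)).toFinset, Sgen k E x) := by
  classical
  let gen : F.V ⊕ F.E → PathAlg k E := fun s =>
    match s with
    | Sum.inl v => ∑ x ∈ (hp (FPath.ofVertex v)).toFinset, Sgen k E x
    | Sum.inr f => ∑ x ∈ (hp (FPath.ofEdge f)).toFinset, Sgen k E x
  let g : FreeAlgebra k (F.V ⊕ F.E) →ₐ[k] PathAlg k E := FreeAlgebra.lift k gen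
  have hg : ∀ s, g (FreeAlgebra.ι k s) = gen s := fun s => FreeAlgebra.lift_ι_apply _ _
  have memv : ∀ (y : FPath F) (x : FPath E),
      x ∈ (hp y).toFinset ↔ (x, y) ∈ R := fun y x => Set.Finite.mem_toFinset _
  have vert : ∀ (v : F.V) (x : FPath E), (x, FPath.ofVertex v) ∈ R →
      x = FPath.ofVertex x.src := fun v x hx => eq_ofVertex (hR.vertex _ _ hx rfl)
  have key : ∀ ⦃a b⦄, PathRel k F a b → g a = g b := by
    intro a b r
    cases r with
    | vertOrth v w hvw =>
      rw [map_mul, map_zero, hg, hg]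
      show (∑ x ∈ (hp (FPath.ofVertex v)).toFinset, Sgen k E x) *
        (∑ x ∈ (hp (FPath.ofVertex w)).toFinset, Sgen k E x) = 0
      rw [Finset.sum_mul_sum]
      refine Finset.sum_eq_zero fun u hu => Finset.sum_eq_zero fun u' hu' => ?_
      rw [memv] at hu hu'
      have h1 := vert _ _ hu
      have h2 := vert _ _ hu'
      rw [h1, Vgen_mul_Sgen]
      split_ifs with h
      · exfalso
        have heq : u' = u := by rw [h2, ← h, ← h1]
        rw [heq] at hu'
        exact hv v w hvw u hu hu'
      · rfl
    | vertIdem v =>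
      rw [map_mul, hg]
      show (∑ x ∈ (hp (FPath.ofVertex v)).toFinset, Sgen k E x) *
        (∑ x ∈ (hp (FPath.ofVertex v)).toFinset, Sgen k E x) =
        ∑ x ∈ (hp (FPath.ofVertex v)).toFinset, Sgen k E x
      rw [Finset.sum_mul_sum]
      refine Finset.sum_congr rfl fun u hu => ?_
      have hu' := hu
      rw [memv] at hu'
      have h1 := vert _ _ hu'
      calc ∑ x ∈ (hp (FPath.ofVertex v)).toFinset, Sgen k E u * Sgen k E x
          = ∑ x ∈ (hp (FPath.ofVertex v)).toFinset,
              (if x = u then Sgen k E x else 0) := by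
            refine Finset.sum_congr rfl fun x hx => ?_
            rw [memv] at hx
            have h2 := vert _ _ hx
            have hc : (u.src = x.src) ↔ (x = u) :=
              ⟨fun h => by rw [h2, ← h, ← h1], fun h => by rw [h]⟩
            conv_lhs => rw [h1]
            rw [Vgen_mul_Sgen]
            simp only [hc]
        _ = Sgen k E u := by rw [Finset.sum_ite_eq', if_pos hu]
    | srcMul f =>
      rw [map_mul, hg, hg]
      show (∑ x ∈ (hp (FPath.ofVertex (F.s f))).toFinset, Sgen k E x) *
        (∑ x ∈ (hp (FPath.ofEdge f)).toFinset, Sgen k E x) =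
        ∑ x ∈ (hp (FPath.ofEdge f)).toFinset, Sgen k E x
      rw [Finset.sum_mul_sum, Finset.sum_comm]
      refine Finset.sum_congr rfl fun x hx => ?_
      have hx' := hx
      rw [memv] at hx'
      have hs : (FPath.ofVertex x.src, FPath.ofVertex (F.s f)) ∈ R := hR.src _ _ hx'
      calc ∑ u ∈ (hp (FPath.ofVertex (F.s f))).toFinset, Sgen k E u * Sgen k E x
          = ∑ u ∈ (hp (FPath.ofVertex (F.s f))).toFinset,
              (if u = FPath.ofVertex x.src then Sgen k E x else 0) := by
            refine Finset.sum_congr rfl fun u hu => ?_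
            rw [memv] at hu
            have h1 := vert _ _ hu
            have hc : (u.src = x.src) ↔ (u = FPath.ofVertex x.src) :=
              ⟨fun h => by rw [h1, h], fun h => by rw [h]; rfl⟩
            conv_lhs => rw [h1]
            rw [Vgen_mul_Sgen]
            simp only [hc]
        _ = Sgen k E x := by
            rw [Finset.sum_ite_eq', if_pos ((memv _ _).2 hs)]
    | mulTgt f =>
      rw [map_mul, hg, hg]
      show (∑ x ∈ (hp (FPath.ofEdge f)).toFinset, Sgen k E x) *
        (∑ x ∈ (hp (FPath.ofVertex (F.t f))).toFinset, Sgen k E x) =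
        ∑ x ∈ (hp (FPath.ofEdge f)).toFinset, Sgen k E x
      rw [Finset.sum_mul_sum]
      refine Finset.sum_congr rfl fun x hx => ?_
      have hx' := hx
      rw [memv] at hx'
      have ht : (FPath.ofVertex x.tgt, FPath.ofVertex (F.t f)) ∈ R := hR.tgt _ _ hx'
      calc ∑ u ∈ (hp (FPath.ofVertex (F.t f))).toFinset, Sgen k E x * Sgen k E u
          = ∑ u ∈ (hp (FPath.ofVertex (F.t f))).toFinset,
              (if u = FPath.ofVertex x.tgt then Sgen k E x else 0) := by
            refine Finset.sum_congr rfl fun u hu => ?_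
            rw [memv] at hu
            have h1 := vert _ _ hu
            have hc : (x.tgt = u.src) ↔ (u = FPath.ofVertex x.tgt) :=
              ⟨fun h => by rw [h1, ← h], fun h => by rw [h]; rfl⟩
            conv_lhs => rw [h1]
            rw [Sgen_mul_Vgen]
            simp only [hc]
        _ = Sgen k E x := by
            rw [Finset.sum_ite_eq', if_pos ((memv _ _).2 ht)]
  refine ⟨RingQuot.liftAlgHom k ⟨g, key⟩, fun v => ?_, fun f => ?_⟩
  · rw [Sgen_ofVertex, Vgen, RingQuot.liftAlgHom_mkAlgHom_apply, hg]
  · rw [Sgen_ofEdge, Egen, RingQuot.liftAlgHom_mkAlgHom_apply, hg]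
end

section
/- Let R : E → F and S : F → G be relation morphisms of directed graphs that are multiplicative, decomposable, proper, vertex disjoint and target injective. Then for every vertex w ∈ G⁰, the set {u ∈ E⁰ : (u,w) ∈ S ∘ R} is the disjoint union over v ∈ S⁻¹(w) of the sets {u ∈ E⁰ : (u,v) ∈ R}. -/
/-- for PRG morphisms `R : E → F` and `S : F → G` and any vertex `w`
of `G`, the vertex preimage of `w` under `S ∘ R` is the disjoint union, over
`v ∈ S⁻¹(w)`, of the vertex preimages of `v` under `R`. -/
theorem statement14 {E F G : DGraph} {R : GraphRel E F} {S : GraphRel F G}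
    (hR : IsRelMorphism E F R) (hS : IsRelMorphism F G S)
    (hRm : RelMult R) (hSm : RelMult S) (hRd : RelDecomp R) (hSd : RelDecomp S)
    (hRp : RelProper R) (hSp : RelProper S)
    (hRv : RelVertexDisjoint R) (hSv : RelVertexDisjoint S)
    (hRt : RelTargetInj R) (hSt : RelTargetInj S)
    (w : G.V) :
    (∀ u : E.V, (FPath.ofVertex u, FPath.ofVertex w) ∈ RelComp R S ↔
      ∃ v : F.V, (FPath.ofVertex v, FPath.ofVertex w) ∈ S ∧
        (FPath.ofVertex u, FPath.ofVertex v) ∈ R) ∧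
    (∀ v v' : F.V, v ≠ v' →
      (FPath.ofVertex v, FPath.ofVertex w) ∈ S →
      (FPath.ofVertex v', FPath.ofVertex w) ∈ S →
      ∀ u : E.V, (FPath.ofVertex u, FPath.ofVertex v) ∈ R →
        (FPath.ofVertex u, FPath.ofVertex v') ∈ R → False) := by
  constructor
  · intro u
    constructor
    · rintro ⟨y, hy1, hy2⟩
      have hv : y.IsVertex := hS.vertex _ _ hy2 rfl
      have : y = FPath.ofVertex y.src := by
        obtain ⟨s, t, es, ch⟩ := y
        simp only [FPath.IsVertex] at hv
        subst hv
        cases ch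
        rfl
      rw [this] at hy1 hy2
      exact ⟨y.src, hy2, hy1⟩
    · rintro ⟨v, h1, h2⟩
      exact ⟨FPath.ofVertex v, h2, h1⟩
  · intro v v' hne _ _ u h1 h2
    exact hRv v v' hne _ h1 h2
end

section
/- Let φ : E → F be a proper target-bijective graph homomorphism between directed graphs. Then the associated relation R_φ = {(x, φ(x)) : x ∈ FP(E)} is regular if and only if φ⁻¹(reg(F)) ⊆ reg(E), i.e., the preimage of every regular vertex of F under φ is a regular vertex of E. -/
lemma FPath.eq_ofEdge_s18 {G : DGraph} {x : FPath G} {e : G.E} (h : x.edges = [e]) :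
    x = FPath.ofEdge e := by
  obtain ⟨src, tgt, edges, ch⟩ := x
  simp only at h
  subst h
  obtain ⟨hs, ht⟩ := ch
  have ht' : G.t e = tgt := ht
  subst hs; subst ht'
  rfl

lemma FPath.exists_ofEdge {G : DGraph} {x : FPath G} (h : x.edges.length = 1) :
    ∃ e, x = FPath.ofEdge e := by
  obtain ⟨e, he⟩ := List.length_eq_one_iff.mp h
  exact ⟨e, FPath.eq_ofEdge_s18 he⟩

lemma image_edge {E F : DGraph} {φ : FPath E → FPath F} (h1 : IsGraphHom φ) {v : E.V} {w : F.V}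
    (hu : φ (FPath.ofVertex v) = FPath.ofVertex w) {e : E.E} (he : E.s e = v) :
    ∃ f, φ (FPath.ofEdge e) = FPath.ofEdge f ∧ F.s f = w := by
  have hlen : (φ (FPath.ofEdge e)).edges.length = 1 := h1.2 (FPath.ofEdge e)
  obtain ⟨f, hf⟩ := FPath.exists_ofEdge hlen
  refine ⟨f, hf, ?_⟩
  have hs := h1.1.2.1 (FPath.ofEdge e)
  rw [hf] at hs
  rw [show (FPath.ofEdge e).src = E.s e from rfl, he] at hs
  rw [hu] at hs
  exact (congrArg FPath.src hs).symm

/-- for a proper target-bijective graph homomorphism `φ : E → F`,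
the relation `R_φ` is regular iff `φ⁻¹(reg F) ⊆ reg E`. -/
theorem statement18 {E F : DGraph} (φ : FPath E → FPath F)
    (h1 : IsGraphHom φ) (h2 : GHProper φ) (h3 : GHTargetInj φ) (h4 : GHTargetSurj φ) :
    RelRegular (relOfFun φ) ↔
      ∀ v : F.V, F.IsRegularV v → ∀ u : E.V,
        φ (FPath.ofVertex u) = FPath.ofVertex v → E.IsRegularV u := by
  constructor
  · intro hreg v hv u hu
    have huR : (FPath.ofVertex u, FPath.ofVertex v) ∈ relOfFun φ := hu.symm
    constructor
    · obtain ⟨x', f, hx'R, hsf, hcomp⟩ := hreg v hv u huR (FPath.ofVertex u) rfl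
      have hlen : x'.edges.length = 1 := by
        have := h1.2 x'
        rw [show φ x' = FPath.ofEdge f from hx'R.symm] at this
        simpa [FPath.ofEdge] using this.symm
      obtain ⟨e, he⟩ := List.length_eq_one_iff.mp hlen
      rcases hcomp with h | h
      · refine ⟨e, ?_⟩
        have := h.1
        rw [FPath.eq_ofEdge_s18 he] at this
        exact this.symm
      · exfalso
        have := h.2
        rw [he] at this
        simp [FPath.ofVertex] at this
    · have hSfin : {f : F.E | F.s f = v}.Finite := hv.2
      have hsub : {e : E.E | E.s e = u} ⊆
          ⋃ f ∈ {f : F.E | F.s f = v}, {e : E.E | φ (FPath.ofEdge e) = FPath.ofEdge f} := by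
        intro e (he : E.s e = u)
        obtain ⟨x', f, hx'R, hsf, hcomp⟩ := hreg v hv u huR (FPath.ofEdge e) he
        have hlen : x'.edges.length = 1 := by
          have := h1.2 x'
          rw [show φ x' = FPath.ofEdge f from hx'R.symm] at this
          simpa [FPath.ofEdge] using this.symm
        obtain ⟨e', he'⟩ := List.length_eq_one_iff.mp hlen
        have hee : e = e' := by
          rcases hcomp with h | h
          · have := h.2
            rw [he'] at this
            have := this.eq_of_length (by simp [FPath.ofEdge])
            simpa [FPath.ofEdge] using this
          · have := h.2
            rw [he'] at this
            have := this.eq_of_length (by simp [FPath.ofEdge])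
            simpa [FPath.ofEdge] using this.symm
        subst hee
        have : φ (FPath.ofEdge e) = FPath.ofEdge f := by
          rw [← FPath.eq_ofEdge_s18 he']; exact hx'R.symm
        exact Set.mem_biUnion hsf this
      refine Set.Finite.subset (Set.Finite.biUnion hSfin fun f _ => ?_) hsub
      have hfin : {x : FPath E | φ x = FPath.ofEdge f}.Finite := h2 (FPath.ofEdge f) (by simp [FPath.ofEdge])
      have : {e : E.E | φ (FPath.ofEdge e) = FPath.ofEdge f} =
          (fun e : E.E => FPath.ofEdge e) ⁻¹' {x : FPath E | φ x = FPath.ofEdge f} := rfl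
      rw [this]
      refine Set.Finite.preimage ?_ hfin
      intro a _ b _ hab
      have : (FPath.ofEdge a).edges = (FPath.ofEdge b).edges := congrArg FPath.edges hab
      simpa [FPath.ofEdge] using this
  · intro h v hv u huR x hxsrc
    have hu : φ (FPath.ofVertex u) = FPath.ofVertex v := huR.symm
    rcases hx : x.edges with _ | ⟨e, es⟩
    · obtain ⟨e, he⟩ := (h v hv u hu).1
      obtain ⟨f, hf, hsf⟩ := image_edge h1 hu he
      refine ⟨FPath.ofEdge e, f, hf.symm, hsf, Or.inl ⟨?_, ?_⟩⟩
      · rw [hxsrc, show (FPath.ofEdge e).src = E.s e from rfl, he]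
      · rw [hx]; exact List.nil_prefix
    · have he : E.s e = u := by
        have := x.chain
        rw [hx] at this
        rw [this.1, hxsrc]
      obtain ⟨f, hf, hsf⟩ := image_edge h1 hu he
      refine ⟨FPath.ofEdge e, f, hf.symm, hsf, Or.inr ⟨?_, ?_⟩⟩
      · rw [hxsrc, show (FPath.ofEdge e).src = E.s e from rfl, he]
      · rw [hx, show (FPath.ofEdge e).edges = [e] from rfl]
        exact ⟨es, rfl⟩
end
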